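/- arXiv:2006.10501 — 2 statements merged into one kernel-verified Lean document; each statement's English description precedes it below -/
import Mathlib

section
/- Let R be a finite commutative local chain ring with Jacobson radical J of nilpotency order n₁ ≥ 3, and let X be any resolving set of AG(R). Then |X| ≥ ⌊(n₁-1)/2⌋. -/
open Ideal IsLocalRing

/-- A nonzero ideal with nonzero annihilator: a vertex of the annihilating-ideal graph. -/
def AGIsVertex {R : Type*} [CommRing R] (I : Ideal R) : Prop :=
  I ≠ ⊥ ∧ ∃ K : Ideal R, K ≠ ⊥ ∧ I * K = ⊥

/-- The vertex set of the annihilating-ideal graph. -/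
def AGVertex (R : Type*) [CommRing R] : Type _ := {I : Ideal R // AGIsVertex I}

/-- The annihilating-ideal graph of a commutative ring. -/
def AG (R : Type*) [CommRing R] : SimpleGraph (AGVertex R) where
  Adj I J := I ≠ J ∧ I.1 * J.1 = ⊥
  symm := by
    constructor
    rintro a b ⟨h1, h2⟩
    exact ⟨h1.symm, by rwa [mul_comm] at h2⟩
  loopless := by constructor; rintro a ⟨h, -⟩; exact h rfl

/-- A resolving set for a graph. -/
def IsResolving {V : Type*} (G : SimpleGraph V) (W : Set V) : Prop :=
  ∀ u v : V, (∀ w ∈ W, G.dist u w = G.dist v w) → u = v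

/-- The metric dimension of a graph. -/
noncomputable def metricDim {V : Type*} (G : SimpleGraph V) : ℕ :=
  sInf {n | ∃ W : Set V, IsResolving G W ∧ W.Finite ∧ W.ncard = n}

/-- The ideal of a product ring given by a family of ideals of the factors. -/
def piIdeal {ι : Type*} {R : ι → Type*} [∀ i, CommRing (R i)]
    (I : ∀ i, Ideal (R i)) : Ideal (∀ i, R i) where
  carrier := {x | ∀ i, x i ∈ I i}
  add_mem' h1 h2 i := (I _).add_mem (h1 i) (h2 i)
  zero_mem' i := (I i).zero_mem
  smul_mem' c x hx := by
    intro i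
    simpa using (I i).mul_mem_left (c i) (hx i)

/-- The family of ideals with the ideal `I` at index `s` and zero elsewhere. -/
def singleIdeal {ι : Type*} [DecidableEq ι] {R : ι → Type*} [∀ i, CommRing (R i)]
    (s : ι) (I : Ideal (R s)) : ∀ i, Ideal (R i) :=
  fun i => if h : i = s then cast (by rw [h]) I else ⊥

/-- The family of ideals with the ideal `I` at index `s` and everything elsewhere. -/
def coSingleIdeal {ι : Type*} [DecidableEq ι] {R : ι → Type*} [∀ i, CommRing (R i)]
    (s : ι) (I : Ideal (R s)) : ∀ i, Ideal (R i) :=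
  fun i => if h : i = s then cast (by rw [h]) I else ⊤

section Stmt8Aux

variable {R : Type*} [CommRing R] [IsLocalRing R] {n₁ : ℕ}

omit [IsLocalRing R] in
lemma stmt8_vertex_ne_top {I : Ideal R} (h : AGIsVertex I) : I ≠ ⊤ := by
  obtain ⟨h0, K, hK, hIK⟩ := h
  rintro rfl
  rw [top_mul] at hIK
  exact hK hIK

lemma stmt8_pow_ne_bot (h2 : (maximalIdeal R) ^ (n₁ - 1) ≠ ⊥) {k : ℕ} (hk : k ≤ n₁ - 1) :
    (maximalIdeal R) ^ k ≠ ⊥ := by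
  intro h
  exact h2 (le_bot_iff.mp (h ▸ Ideal.pow_le_pow_right hk))

lemma stmt8_pow_eq_bot (h1 : (maximalIdeal R) ^ n₁ = ⊥) {k : ℕ} (hk : n₁ ≤ k) :
    (maximalIdeal R) ^ k = ⊥ :=
  le_bot_iff.mp (h1 ▸ Ideal.pow_le_pow_right hk)

lemma stmt8_exp_inj (h1 : (maximalIdeal R) ^ n₁ = ⊥) (h2 : (maximalIdeal R) ^ (n₁ - 1) ≠ ⊥)
    {a b : ℕ} (ha : a ≤ n₁ - 1) (hb : b ≤ n₁ - 1)
    (h : (maximalIdeal R) ^ a = (maximalIdeal R) ^ b) : a = b := by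
  have key : ∀ x y : ℕ, x ≤ n₁ - 1 → x < y →
      (maximalIdeal R) ^ x = (maximalIdeal R) ^ y → False := by
    intro x y hxle hxy heq
    apply h2
    have e1 : (maximalIdeal R) ^ x * (maximalIdeal R) ^ (n₁ - 1 - x)
        = (maximalIdeal R) ^ y * (maximalIdeal R) ^ (n₁ - 1 - x) := by rw [heq]
    rw [← pow_add, ← pow_add] at e1
    have e2 : (maximalIdeal R) ^ (y + (n₁ - 1 - x)) = ⊥ := stmt8_pow_eq_bot h1 (by omega)
    rw [e2] at e1
    rw [show n₁ - 1 = x + (n₁ - 1 - x) by omega]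
    exact e1
  rcases lt_trichotomy a b with hlt | heq | hlt
  · exact absurd (key a b ha hlt h) (by simp)
  · exact heq
  · exact absurd (key b a hb hlt h.symm) (by simp)

lemma stmt8_vertex (hn : 3 ≤ n₁) (h1 : (maximalIdeal R) ^ n₁ = ⊥)
    (h2 : (maximalIdeal R) ^ (n₁ - 1) ≠ ⊥) {k : ℕ} (hk1 : 1 ≤ k) (hk2 : k ≤ n₁ - 1) :
    AGIsVertex ((maximalIdeal R) ^ k) :=
  ⟨stmt8_pow_ne_bot h2 hk2, (maximalIdeal R) ^ (n₁ - k),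
    stmt8_pow_ne_bot h2 (by omega), by
      rw [← pow_add]; exact stmt8_pow_eq_bot h1 (by omega)⟩

lemma stmt8_exists_exp [IsPrincipalIdealRing R] (h1 : (maximalIdeal R) ^ n₁ = ⊥)
    {I : Ideal R} (hI0 : I ≠ ⊥) (hIt : I ≠ ⊤) :
    ∃ k, 1 ≤ k ∧ k ≤ n₁ - 1 ∧ I = (maximalIdeal R) ^ k := by
  classical
  obtain ⟨x, hx⟩ := (IsPrincipalIdealRing.principal I).principal
  rw [Ideal.submodule_span_eq] at hx
  have hx0 : x ≠ 0 := by rintro rfl; apply hI0; rw [hx]; simp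
  have hxM : x ∈ maximalIdeal R := by
    rw [mem_maximalIdeal]
    intro hu
    exact hIt (hx.trans (Ideal.span_singleton_eq_top.mpr (not_not.mp (by simpa using hu))))
  have hex : ∃ j, x ∉ (maximalIdeal R) ^ j := ⟨n₁, by rw [h1]; simpa using hx0⟩
  set j := Nat.find hex with hjdef
  have hj : x ∉ (maximalIdeal R) ^ j := Nat.find_spec hex
  have hj0 : j ≠ 0 := by
    intro h; rw [h, pow_zero] at hj
    exact hj (by rw [Ideal.one_eq_top]; exact Submodule.mem_top)
  have hj1 : j ≠ 1 := by intro h; rw [h, pow_one] at hj; exact hj hxM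
  have hjle : j ≤ n₁ := Nat.find_le (by rw [h1]; simpa using hx0)
  have hxmem : x ∈ (maximalIdeal R) ^ (j - 1) := by
    by_contra hc
    exact Nat.find_min hex (show j - 1 < j by omega) hc
  obtain ⟨π, hπ⟩ := (IsPrincipalIdealRing.principal (maximalIdeal R)).principal
  rw [Ideal.submodule_span_eq] at hπ
  have hpow : (maximalIdeal R) ^ (j - 1) = span {π ^ (j - 1)} := by
    rw [hπ, Ideal.span_singleton_pow]
  obtain ⟨c, hc⟩ := Ideal.mem_span_singleton'.mp (hpow ▸ hxmem)
  have hcu : IsUnit c := by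
    by_contra hcu
    apply hj
    have hcM : c ∈ maximalIdeal R := (mem_maximalIdeal c).mpr hcu
    have hmem : x ∈ maximalIdeal R * (maximalIdeal R) ^ (j - 1) := by
      rw [← hc]
      exact Ideal.mul_mem_mul hcM (by rw [hpow]; exact Ideal.subset_span rfl)
    have hpj : maximalIdeal R * (maximalIdeal R) ^ (j - 1) = (maximalIdeal R) ^ j := by
      rw [← pow_succ']
      congr 1
      omega
    rwa [hpj] at hmem
  refine ⟨j - 1, by omega, by omega, ?_⟩
  rw [hx, hpow]
  apply le_antisymm
  · rw [Ideal.span_singleton_le_span_singleton]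
    exact ⟨c, by rw [mul_comm]; exact hc.symm⟩
  · rw [Ideal.span_singleton_le_span_singleton]
    obtain ⟨u, hu⟩ := hcu
    refine ⟨(↑u⁻¹ : R), ?_⟩
    rw [← hc, ← hu, mul_comm ((u : R)) (π ^ (j - 1)), mul_assoc, Units.mul_inv, mul_one]

lemma stmt8_dist_two (hn : 3 ≤ n₁) (h1 : (maximalIdeal R) ^ n₁ = ⊥)
    (h2 : (maximalIdeal R) ^ (n₁ - 1) ≠ ⊥) {u w : AGVertex R} (hne : u ≠ w)
    (hadj : ¬ (AG R).Adj u w) : (AG R).dist u w = 2 := by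
  set hv : AGVertex R := ⟨(maximalIdeal R) ^ (n₁ - 1),
    stmt8_vertex hn h1 h2 (by omega) le_rfl⟩ with hhv
  have hadjhub : ∀ v : AGVertex R, v ≠ hv → (AG R).Adj v hv := by
    intro v hvne
    refine ⟨hvne, ?_⟩
    have hle : v.1 * (maximalIdeal R) ^ (n₁ - 1) ≤ (maximalIdeal R) ^ n₁ := by
      calc v.1 * (maximalIdeal R) ^ (n₁ - 1)
          ≤ maximalIdeal R * (maximalIdeal R) ^ (n₁ - 1) :=
            Ideal.mul_mono_left (le_maximalIdeal (stmt8_vertex_ne_top v.2))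
        _ = (maximalIdeal R) ^ n₁ := by rw [← pow_succ']; congr 1; omega
    exact le_bot_iff.mp (h1 ▸ hle)
  have hune : u ≠ hv := by
    rintro rfl
    exact hadj ((AG R).adj_symm (hadjhub w hne.symm))
  have hwne : w ≠ hv := by
    rintro rfl
    exact hadj (hadjhub u hne)
  have hreach : (AG R).Reachable u w :=
    ⟨.cons (hadjhub u hune) (.cons ((AG R).adj_symm (hadjhub w hwne)) .nil)⟩
  have hle2 : (AG R).dist u w ≤ 2 :=
    SimpleGraph.dist_le (.cons (hadjhub u hune) (.cons ((AG R).adj_symm (hadjhub w hwne)) .nil))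
  have hne0 : (AG R).dist u w ≠ 0 := by
    intro h0
    rcases SimpleGraph.dist_eq_zero_iff_eq_or_not_reachable.mp h0 with h | h
    · exact hne h
    · exact h hreach
  have hne1 : (AG R).dist u w ≠ 1 := fun h => hadj (SimpleGraph.dist_eq_one_iff_adj.mp h)
  omega

end Stmt8Aux

theorem stmt8 (R : Type*) [CommRing R] [Finite R] [IsLocalRing R] [IsPrincipalIdealRing R] (n₁ : ℕ) (hn : 3 ≤ n₁) (h1 : (maximalIdeal R) ^ n₁ = ⊥) (h2 : (maximalIdeal R) ^ (n₁ - 1) ≠ ⊥)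
    (X : Finset (AGVertex R)) (hX : IsResolving (AG R) ↑X) :
    (n₁ - 1) / 2 ≤ X.card := by
  classical
  have hexp : ∀ v : AGVertex R, ∃ k, 1 ≤ k ∧ k ≤ n₁ - 1 ∧ v.1 = (maximalIdeal R) ^ k :=
    fun v => stmt8_exists_exp h1 v.2.1 (stmt8_vertex_ne_top v.2)
  choose e he1 he2 he3 using hexp
  have hadj_iff : ∀ u w : AGVertex R, u ≠ w → ((AG R).Adj u w ↔ n₁ ≤ e u + e w) := by
    intro u w hne
    constructor
    · rintro ⟨-, hprod⟩
      by_contra hlt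
      push_neg at hlt
      apply stmt8_pow_ne_bot h2 (k := e u + e w) (by omega)
      rw [pow_add, ← he3 u, ← he3 w]
      exact hprod
    · intro hge
      refine ⟨hne, ?_⟩
      rw [he3 u, he3 w, ← pow_add]
      exact stmt8_pow_eq_bot h1 hge
  have hEv : ∀ (k : ℕ) (hk1 : 1 ≤ k) (hk2 : k ≤ n₁ - 1),
      e ⟨(maximalIdeal R) ^ k, stmt8_vertex hn h1 h2 hk1 hk2⟩ = k := by
    intro k hk1 hk2
    exact stmt8_exp_inj h1 h2 (he2 _) hk2 (he3 ⟨(maximalIdeal R) ^ k, stmt8_vertex hn h1 h2 hk1 hk2⟩).symm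
  set C : Finset ℕ := X.image e with hC
  set T : Finset ℕ := (Finset.Icc 1 (n₁ - 1)) \ C with hT
  set G : ℕ → ℕ := fun t => (X.filter (fun w => n₁ ≤ t + e w)).card with hG
  have hGle : ∀ t, G t ≤ X.card := fun t => Finset.card_le_card (Finset.filter_subset _ _)
  have key : ∀ a b, a ∈ T → b ∈ T → G a = G b → a < b → False := by
    intro a b ha hb hab hlt
    rw [hT, Finset.mem_sdiff, Finset.mem_Icc] at ha hb
    obtain ⟨⟨ha1, ha2⟩, haC⟩ := ha
    obtain ⟨⟨hb1, hb2⟩, hbC⟩ := hb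
    have hsub : X.filter (fun w => n₁ ≤ a + e w) ⊆ X.filter (fun w => n₁ ≤ b + e w) := by
      intro w hw
      rw [Finset.mem_filter] at hw ⊢
      exact ⟨hw.1, by omega⟩
    have heqf : X.filter (fun w => n₁ ≤ a + e w) = X.filter (fun w => n₁ ≤ b + e w) :=
      Finset.eq_of_subset_of_card_le hsub hab.ge
    have hiff : ∀ w ∈ X, (n₁ ≤ a + e w ↔ n₁ ≤ b + e w) := by
      intro w hw
      constructor
      · intro h; omega
      · intro h
        have hmem : w ∈ X.filter (fun w => n₁ ≤ a + e w) := by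
          rw [heqf, Finset.mem_filter]; exact ⟨hw, h⟩
        exact (Finset.mem_filter.mp hmem).2
    set va : AGVertex R := ⟨(maximalIdeal R) ^ a, stmt8_vertex hn h1 h2 ha1 ha2⟩ with hva
    set vb : AGVertex R := ⟨(maximalIdeal R) ^ b, stmt8_vertex hn h1 h2 hb1 hb2⟩ with hvb
    have hea : e va = a := hEv a ha1 ha2
    have heb : e vb = b := hEv b hb1 hb2
    have hvab : va ≠ vb := by
      intro h
      rw [← hea, ← heb, h] at hlt
      omega
    have hvaX : va ∉ X := fun h => haC (hC ▸ (hea ▸ Finset.mem_image_of_mem e h))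
    have hvbX : vb ∉ X := fun h => hbC (hC ▸ (heb ▸ Finset.mem_image_of_mem e h))
    apply hvab
    apply hX va vb
    intro w hw
    have hwX : w ∈ X := hw
    have hwa : va ≠ w := fun h => hvaX (h ▸ hwX)
    have hwb : vb ≠ w := fun h => hvbX (h ▸ hwX)
    by_cases hcase : n₁ ≤ a + e w
    · have d1 : (AG R).dist va w = 1 :=
        SimpleGraph.dist_eq_one_iff_adj.mpr ((hadj_iff va w hwa).mpr (by omega))
      have d2 : (AG R).dist vb w = 1 :=
        SimpleGraph.dist_eq_one_iff_adj.mpr ((hadj_iff vb w hwb).mpr (by omega))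
      rw [d1, d2]
    · have hcb : ¬ n₁ ≤ b + e w := fun h => hcase ((hiff w hwX).mpr h)
      have d1 : (AG R).dist va w = 2 :=
        stmt8_dist_two hn h1 h2 hwa (fun h => hcase (by have := (hadj_iff va w hwa).mp h; omega))
      have d2 : (AG R).dist vb w = 2 :=
        stmt8_dist_two hn h1 h2 hwb (fun h => hcb (by have := (hadj_iff vb w hwb).mp h; omega))
      rw [d1, d2]
  have hinj : Set.InjOn G ↑T := by
    intro a ha b hb hab
    by_contra hne
    rcases lt_trichotomy a b with hlt | heq | hlt
    · exact key a b (Finset.mem_coe.mp ha) (Finset.mem_coe.mp hb) hab hlt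
    · exact hne heq
    · exact key b a (Finset.mem_coe.mp hb) (Finset.mem_coe.mp ha) hab.symm hlt
  have hTle : T.card ≤ X.card + 1 := by
    have hmaps : ∀ t ∈ T, G t ∈ Finset.range (X.card + 1) := fun t _ =>
      Finset.mem_range.mpr (Nat.lt_succ_of_le (hGle t))
    calc T.card ≤ (Finset.range (X.card + 1)).card :=
          Finset.card_le_card_of_injOn G hmaps hinj
      _ = X.card + 1 := Finset.card_range _
  have hCle : C.card ≤ X.card := Finset.card_image_le
  have hIcc : (Finset.Icc 1 (n₁ - 1)).card = n₁ - 1 := by rw [Nat.card_Icc]; omega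
  have hTge : (Finset.Icc 1 (n₁ - 1)).card - C.card ≤ T.card := Finset.le_card_sdiff C _
  omega
end

section
/- Let R ≅ R₁ × ... × Rₙ with n ≥ 3, where each Rᵢ is a finite commutative local chain ring with Jacobson radical Jᵢ of nilpotency order nᵢ. Then the set X = {I_{s,k} : 1 ≤ s ≤ n, 0 ≤ k ≤ nₛ-1}, where I_{s,k} is the ideal with s-th component Jₛ^k and all other components 0, is a resolving set for AG(R). Consequently, dim_M(AG(R)) ≤ Σᵢ nᵢ. -/
open Ideal IsLocalRing

section Aux
set_option linter.unusedSectionVars false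
set_option linter.unnecessarySimpa false

open Ideal IsLocalRing

variable {ι : Type*} [Fintype ι] [DecidableEq ι] {R : ι → Type*} [∀ i, CommRing (R i)]

lemma mem_piIdeal {I : ∀ i, Ideal (R i)} {x : ∀ i, R i} :
    x ∈ piIdeal I ↔ ∀ i, x i ∈ I i := Iff.rfl

lemma singleIdeal_same (s : ι) (I : Ideal (R s)) : singleIdeal s I s = I := by
  simp [singleIdeal]

lemma singleIdeal_of_ne {s i : ι} (h : i ≠ s) (I : Ideal (R s)) : singleIdeal s I i = ⊥ := by
  simp [singleIdeal, h]

lemma single_mem_piIdeal {I : ∀ i, Ideal (R i)} {i : ι} {x : R i} (hx : x ∈ I i) :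
    Pi.single i x ∈ piIdeal I := by
  intro j
  by_cases h : j = i
  · subst h; simpa [Pi.single_eq_same] using hx
  · simpa [Pi.single_eq_of_ne h] using (I j).zero_mem

lemma ideal_eq_piIdeal (I : Ideal (∀ i, R i)) :
    I = piIdeal (fun i => I.map (Pi.evalRingHom R i)) := by
  ext x
  constructor
  · intro hx i
    exact Ideal.mem_map_of_mem _ hx
  · intro hx
    have hx' : ∀ i, ∃ y ∈ I, y i = x i := by
      intro i
      exact (Ideal.mem_map_iff_of_surjective (Pi.evalRingHom R i)
        (Function.surjective_eval i)).mp (hx i)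
    choose y hy hyx using hx'
    have : x = ∑ i, Pi.single i (1 : R i) * y i := by
      rw [← Finset.univ_sum_single x]
      refine Finset.sum_congr rfl fun i _ => ?_
      funext j
      by_cases h : j = i
      · subst h; simp [Pi.single_eq_same, hyx]
      · simp [Pi.single_eq_of_ne h]
    rw [this]
    exact Ideal.sum_mem _ fun i _ => I.mul_mem_left _ (hy i)

lemma piIdeal_mul_eq_bot_iff {A B : ∀ i, Ideal (R i)} :
    piIdeal A * piIdeal B = ⊥ ↔ ∀ i, A i * B i = ⊥ := by
  constructor
  · intro h i
    rw [eq_bot_iff]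
    intro z hz
    have hz' : Pi.single i z ∈ piIdeal A * piIdeal B := by
      refine Submodule.mul_induction_on hz (fun a ha b hb => ?_) (fun x y hx hy => ?_)
      · rw [Pi.single_mul]
        exact Ideal.mul_mem_mul (single_mem_piIdeal ha) (single_mem_piIdeal hb)
      · rw [Pi.single_add]; exact Ideal.add_mem _ hx hy
    rw [h, Ideal.mem_bot] at hz'
    have := congrFun hz' i
    rw [Pi.single_eq_same] at this
    rw [Ideal.mem_bot, this]; rfl
  · intro h
    rw [eq_bot_iff]
    rw [Ideal.mul_le]
    intro r hr s hs
    rw [Ideal.mem_bot]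
    funext i
    have : r i * s i ∈ A i * B i := Ideal.mul_mem_mul (hr i) (hs i)
    rw [h i, Ideal.mem_bot] at this
    exact this

lemma piIdeal_mul_single_eq_bot_iff {A : ∀ i, Ideal (R i)} {s : ι} {J : Ideal (R s)} :
    piIdeal A * piIdeal (singleIdeal s J) = ⊥ ↔ A s * J = ⊥ := by
  rw [piIdeal_mul_eq_bot_iff]
  constructor
  · intro h
    have := h s
    rwa [singleIdeal_same] at this
  · intro h i
    by_cases hi : i = s
    · subst hi; rwa [singleIdeal_same]
    · rw [singleIdeal_of_ne hi, Ideal.mul_bot]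

lemma chain_nontrivial {S : Type*} [CommRing S] {n : ℕ} {m : Ideal S}
    (h2 : m ^ (n - 1) ≠ ⊥) : Nontrivial S := by
  by_contra h
  rw [not_nontrivial_iff_subsingleton] at h
  exact h2 (Subsingleton.elim _ _)

lemma chain_nu_pos {S : Type*} [CommRing S] [IsLocalRing S] {n : ℕ}
    (h1 : maximalIdeal S ^ n = ⊥) (h2 : maximalIdeal S ^ (n - 1) ≠ ⊥) : 1 ≤ n := by
  have : Nontrivial S := chain_nontrivial h2
  rcases Nat.eq_zero_or_pos n with h | h
  · exfalso
    rw [h, pow_zero, Ideal.one_eq_top] at h1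
    have : (1 : S) ∈ (⊥ : Ideal S) := h1 ▸ Submodule.mem_top
    rw [Ideal.mem_bot] at this
    exact one_ne_zero this
  · exact h

lemma chain_pow_eq_bot_iff {S : Type*} [CommRing S] [IsLocalRing S] {n : ℕ}
    (h1 : maximalIdeal S ^ n = ⊥) (h2 : maximalIdeal S ^ (n - 1) ≠ ⊥) {k : ℕ} :
    maximalIdeal S ^ k = ⊥ ↔ n ≤ k := by
  constructor
  · intro h
    by_contra hk
    push_neg at hk
    have hk' : k ≤ n - 1 := by omega
    exact h2 (eq_bot_iff.mpr ((Ideal.pow_le_pow_right hk').trans h.le))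
  · intro h
    exact eq_bot_iff.mpr ((Ideal.pow_le_pow_right h).trans h1.le)

lemma chain_ideal_eq_pow {S : Type*} [CommRing S] [IsLocalRing S] [IsPrincipalIdealRing S]
    {n : ℕ} (h1 : maximalIdeal S ^ n = ⊥) (h2 : maximalIdeal S ^ (n - 1) ≠ ⊥)
    (I : Ideal S) : ∃ k ≤ n, I = maximalIdeal S ^ k := by
  classical
  have : Nontrivial S := chain_nontrivial h2
  obtain ⟨π, hπ⟩ := (IsPrincipalIdealRing.principal (maximalIdeal S)).principal
  obtain ⟨x, hx⟩ := (IsPrincipalIdealRing.principal I).principal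
  rw [Ideal.submodule_span_eq] at hπ hx
  by_cases hx0 : x = 0
  · refine ⟨n, le_refl n, ?_⟩
    rw [hx, hx0, Ideal.span_singleton_eq_bot.mpr rfl, h1]
  · have hex : ∃ k, x ∉ maximalIdeal S ^ k := ⟨n, by rw [h1]; simpa [Ideal.mem_bot] using hx0⟩
    set k0 := Nat.find hex with hk0
    have hk0pos : 1 ≤ k0 := by
      rcases Nat.eq_zero_or_pos k0 with h | h
      · exfalso
        have := Nat.find_spec hex
        rw [← hk0, h, pow_zero, Ideal.one_eq_top] at this
        exact this Submodule.mem_top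
      · exact h
    have hk0n : k0 ≤ n := Nat.find_le (by rw [h1]; simpa [Ideal.mem_bot] using hx0)
    set k := k0 - 1 with hk
    have hmem : x ∈ maximalIdeal S ^ k := by
      have := Nat.find_min hex (m := k) (by omega)
      tauto
    have hnmem : x ∉ maximalIdeal S ^ (k + 1) := by
      have : k + 1 = k0 := by omega
      rw [this]
      exact Nat.find_spec hex
    refine ⟨k, by omega, ?_⟩
    rw [hπ, Ideal.span_singleton_pow, Ideal.mem_span_singleton'] at hmem
    obtain ⟨c, hc⟩ := hmem
    have hcu : IsUnit c := by
      by_contra hcu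
      apply hnmem
      have hcm : c ∈ maximalIdeal S := by
        rw [IsLocalRing.mem_maximalIdeal]
        exact hcu
      have : x ∈ maximalIdeal S * maximalIdeal S ^ k := by
        rw [← hc]
        exact Ideal.mul_mem_mul hcm (by
          rw [hπ, Ideal.span_singleton_pow, Ideal.mem_span_singleton']
          exact ⟨1, one_mul _⟩)
      rwa [← pow_succ'] at this
    rw [hx, hπ, Ideal.span_singleton_pow, ← hc, Ideal.span_singleton_mul_left_unit hcu]

end Aux

section Main
set_option linter.unusedSectionVars false

open Ideal IsLocalRing

variable {ι : Type*} [Fintype ι] [DecidableEq ι] {R : ι → Type*}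
    [∀ i, CommRing (R i)] [∀ i, Finite (R i)] [∀ i, IsLocalRing (R i)]
    [∀ i, IsPrincipalIdealRing (R i)] {ν : ι → ℕ}

lemma piSingle_ne_bot (h1 : ∀ i, (maximalIdeal (R i)) ^ (ν i) = ⊥)
    (h2 : ∀ i, (maximalIdeal (R i)) ^ (ν i - 1) ≠ ⊥) {s : ι} {k : ℕ} (hk : k < ν s) :
    piIdeal (singleIdeal s ((maximalIdeal (R s)) ^ k)) ≠ ⊥ := by
  have hne : maximalIdeal (R s) ^ k ≠ ⊥ := fun h => by
    rw [chain_pow_eq_bot_iff (h1 s) (h2 s)] at h; omega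
  obtain ⟨x, hx, hx0⟩ := (Submodule.ne_bot_iff _).mp hne
  intro h
  have hmem : Pi.single s x ∈ piIdeal (singleIdeal s ((maximalIdeal (R s)) ^ k)) :=
    single_mem_piIdeal (by rwa [singleIdeal_same])
  rw [h, Ideal.mem_bot] at hmem
  exact hx0 (by simpa using congrFun hmem s)

lemma piSingle_ne_piSingle (h1 : ∀ i, (maximalIdeal (R i)) ^ (ν i) = ⊥)
    (h2 : ∀ i, (maximalIdeal (R i)) ^ (ν i - 1) ≠ ⊥) {s t : ι} {k l : ℕ}
    (hst : s ≠ t) (hk : k < ν s) :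
    piIdeal (singleIdeal s ((maximalIdeal (R s)) ^ k)) ≠
      piIdeal (singleIdeal t ((maximalIdeal (R t)) ^ l)) := by
  have hne : maximalIdeal (R s) ^ k ≠ ⊥ := fun h => by
    rw [chain_pow_eq_bot_iff (h1 s) (h2 s)] at h; omega
  obtain ⟨x, hx, hx0⟩ := (Submodule.ne_bot_iff _).mp hne
  intro h
  have hmem : Pi.single s x ∈ piIdeal (singleIdeal s ((maximalIdeal (R s)) ^ k)) :=
    single_mem_piIdeal (by rwa [singleIdeal_same])
  rw [h] at hmem
  have := hmem s
  rw [singleIdeal_of_ne hst, Pi.single_eq_same, Ideal.mem_bot] at this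
  exact hx0 this

lemma singles_mul_bot {s t : ι} (hst : s ≠ t) (I : Ideal (R s)) (J : Ideal (R t)) :
    piIdeal (singleIdeal s I) * piIdeal (singleIdeal t J) = ⊥ := by
  rw [piIdeal_mul_eq_bot_iff]
  intro i
  by_cases hi : i = t
  · subst hi
    rw [singleIdeal_of_ne (Ne.symm hst), Ideal.bot_mul]
  · rw [singleIdeal_of_ne hi, Ideal.mul_bot]

lemma singleVertex (h1 : ∀ i, (maximalIdeal (R i)) ^ (ν i) = ⊥)
    (h2 : ∀ i, (maximalIdeal (R i)) ^ (ν i - 1) ≠ ⊥) (hn : 3 ≤ Fintype.card ι)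
    {s : ι} {k : ℕ} (hk : k ≤ ν s - 1) :
    AGIsVertex (piIdeal (singleIdeal s ((maximalIdeal (R s)) ^ k))) := by
  have hνs := chain_nu_pos (h1 s) (h2 s)
  constructor
  · exact piSingle_ne_bot h1 h2 (by omega)
  · obtain ⟨t, ht⟩ := Fintype.exists_ne_of_one_lt_card (by omega) s
    have hνt := chain_nu_pos (h1 t) (h2 t)
    refine ⟨piIdeal (singleIdeal t ((maximalIdeal (R t)) ^ 0)), ?_, ?_⟩
    · exact piSingle_ne_bot h1 h2 (by omega)
    · exact singles_mul_bot (Ne.symm ht) _ _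

lemma vertex_decomp (h1 : ∀ i, (maximalIdeal (R i)) ^ (ν i) = ⊥)
    (h2 : ∀ i, (maximalIdeal (R i)) ^ (ν i - 1) ≠ ⊥) (u : AGVertex (∀ i, R i)) :
    ∃ a : ι → ℕ, (∀ i, a i ≤ ν i) ∧
      u.1 = piIdeal (fun i => (maximalIdeal (R i)) ^ a i) ∧ ∃ j, 1 ≤ a j := by
  have hdec := ideal_eq_piIdeal u.1
  have h := fun i => chain_ideal_eq_pow (h1 i) (h2 i) (Ideal.map (Pi.evalRingHom R i) u.1)
  choose a ha1 ha2 using h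
  have hu : u.1 = piIdeal (fun i => (maximalIdeal (R i)) ^ a i) := by
    rw [hdec]; exact congrArg piIdeal (funext ha2)
  refine ⟨a, ha1, hu, ?_⟩
  obtain ⟨hne, K, hK, hprod⟩ := u.2
  obtain ⟨x, hx, hx0⟩ := (Submodule.ne_bot_iff _).mp hK
  have hj : ∃ j, x j ≠ 0 := by
    by_contra h; push_neg at h; exact hx0 (funext h)
  obtain ⟨j, hj⟩ := hj
  refine ⟨j, ?_⟩
  by_contra haj
  have haj0 : a j = 0 := by omega
  have h1mem : Pi.single j (1 : R j) ∈ u.1 := by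
    rw [hu]
    exact single_mem_piIdeal (by rw [haj0, pow_zero, Ideal.one_eq_top]; trivial)
  have hmul : Pi.single j (1 : R j) * x ∈ u.1 * K := Ideal.mul_mem_mul h1mem hx
  rw [hprod, Ideal.mem_bot] at hmul
  have := congrFun hmul j
  rw [Pi.mul_apply, Pi.single_eq_same, one_mul] at this
  exact hj this

lemma reach_single_single (h1 : ∀ i, (maximalIdeal (R i)) ^ (ν i) = ⊥)
    (h2 : ∀ i, (maximalIdeal (R i)) ^ (ν i - 1) ≠ ⊥) (hn : 3 ≤ Fintype.card ι)
    {s t : ι} {k l : ℕ} (hk : k ≤ ν s - 1) (hl : l ≤ ν t - 1) :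
    (AG (∀ i, R i)).Reachable ⟨_, singleVertex h1 h2 hn hk⟩ ⟨_, singleVertex h1 h2 hn hl⟩ := by
  have hνs := chain_nu_pos (h1 s) (h2 s)
  have hνt := chain_nu_pos (h1 t) (h2 t)
  by_cases hst : s = t
  · subst hst
    obtain ⟨u', hu'⟩ := Fintype.exists_ne_of_one_lt_card (by omega) s
    have hνu := chain_nu_pos (h1 u') (h2 u')
    have a1 : (AG (∀ i, R i)).Adj ⟨_, singleVertex h1 h2 hn hk⟩
        ⟨_, singleVertex h1 h2 hn (show 0 ≤ ν u' - 1 by omega)⟩ := by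
      refine ⟨?_, singles_mul_bot (Ne.symm hu') _ _⟩
      intro h
      exact piSingle_ne_piSingle h1 h2 (Ne.symm hu') (by omega) (Subtype.ext_iff.mp h)
    have a2 : (AG (∀ i, R i)).Adj ⟨_, singleVertex h1 h2 hn (show 0 ≤ ν u' - 1 by omega)⟩
        ⟨_, singleVertex h1 h2 hn hl⟩ := by
      refine ⟨?_, singles_mul_bot hu' _ _⟩
      intro h
      exact piSingle_ne_piSingle h1 h2 hu' (by omega) (Subtype.ext_iff.mp h)
    exact a1.reachable.trans a2.reachable
  · refine SimpleGraph.Adj.reachable ⟨?_, singles_mul_bot hst _ _⟩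
    intro h
    exact piSingle_ne_piSingle h1 h2 hst (by omega) (Subtype.ext_iff.mp h)

lemma reach_single (h1 : ∀ i, (maximalIdeal (R i)) ^ (ν i) = ⊥)
    (h2 : ∀ i, (maximalIdeal (R i)) ^ (ν i - 1) ≠ ⊥) (hn : 3 ≤ Fintype.card ι)
    (u : AGVertex (∀ i, R i)) {s : ι} {k : ℕ} (hk : k ≤ ν s - 1) :
    (AG (∀ i, R i)).Reachable u ⟨_, singleVertex h1 h2 hn hk⟩ := by
  obtain ⟨a, ha, hu, j, hj⟩ := vertex_decomp h1 h2 u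
  have hνj := chain_nu_pos (h1 j) (h2 j)
  have hc1 : ν j - a j ≤ ν j - 1 := by omega
  have step1 : (AG (∀ i, R i)).Reachable u ⟨_, singleVertex h1 h2 hn hc1⟩ := by
    by_cases he : u = ⟨_, singleVertex h1 h2 hn hc1⟩
    · rw [he]; exact SimpleGraph.Reachable.refl _
    · refine SimpleGraph.Adj.reachable ⟨he, ?_⟩
      show u.1 * _ = ⊥
      rw [hu, piIdeal_mul_single_eq_bot_iff, ← pow_add,
        chain_pow_eq_bot_iff (h1 j) (h2 j)]
      omega
  exact step1.trans (reach_single_single h1 h2 hn hc1 hk)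

end Main

theorem stmt13 (ι : Type*) [Fintype ι] [DecidableEq ι] (R : ι → Type*)
    [∀ i, CommRing (R i)] [∀ i, Finite (R i)] [∀ i, IsLocalRing (R i)]
    [∀ i, IsPrincipalIdealRing (R i)]
    (ν : ι → ℕ) (h1 : ∀ i, (maximalIdeal (R i)) ^ (ν i) = ⊥)
    (h2 : ∀ i, (maximalIdeal (R i)) ^ (ν i - 1) ≠ ⊥) (hn : 3 ≤ Fintype.card ι) :
    IsResolving (AG (∀ i, R i))
      {v : AGVertex (∀ i, R i) | ∃ s, ∃ k ≤ ν s - 1,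
        v.1 = piIdeal (singleIdeal s ((maximalIdeal (R s)) ^ k))} ∧
    metricDim (AG (∀ i, R i)) ≤ ∑ i, ν i := by
  classical
  have hνpos : ∀ i, 1 ≤ ν i := fun i => chain_nu_pos (h1 i) (h2 i)
  set X := {v : AGVertex (∀ i, R i) | ∃ s, ∃ k ≤ ν s - 1,
      v.1 = piIdeal (singleIdeal s ((maximalIdeal (R s)) ^ k))} with hX
  have hres : IsResolving (AG (∀ i, R i)) X := by
    intro u v hd
    by_cases hu : u ∈ X
    · obtain ⟨s, k, hk, hu1⟩ := hu
      have hueq : u = ⟨_, singleVertex h1 h2 hn hk⟩ := Subtype.ext hu1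
      have hdu := hd u ⟨s, k, hk, hu1⟩
      rw [SimpleGraph.dist_self] at hdu
      have hreach : (AG (∀ i, R i)).Reachable v u := by
        rw [hueq]; exact reach_single h1 h2 hn v hk
      rcases SimpleGraph.dist_eq_zero_iff_eq_or_not_reachable.mp hdu.symm with h | h
      · exact h.symm
      · exact absurd hreach h
    by_cases hv : v ∈ X
    · obtain ⟨s, k, hk, hv1⟩ := hv
      have hveq : v = ⟨_, singleVertex h1 h2 hn hk⟩ := Subtype.ext hv1
      have hdv := hd v ⟨s, k, hk, hv1⟩
      rw [SimpleGraph.dist_self] at hdv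
      have hreach : (AG (∀ i, R i)).Reachable u v := by
        rw [hveq]; exact reach_single h1 h2 hn u hk
      rcases SimpleGraph.dist_eq_zero_iff_eq_or_not_reachable.mp hdv with h | h
      · exact h
      · exact absurd hreach h
    obtain ⟨a, ha, hu1, -⟩ := vertex_decomp h1 h2 u
    obtain ⟨b, hb, hv1, -⟩ := vertex_decomp h1 h2 v
    have key : ∀ s, a s = b s := by
      intro s
      have hiff : ∀ k, k ≤ ν s - 1 → (ν s ≤ a s + k ↔ ν s ≤ b s + k) := by
        intro k hk
        set w : AGVertex (∀ i, R i) := ⟨_, singleVertex h1 h2 hn hk⟩ with hw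
        have hwX : w ∈ X := ⟨s, k, hk, rfl⟩
        have hune : u ≠ w := fun h => hu ⟨s, k, hk, by rw [h]⟩
        have hvne : v ≠ w := fun h => hv ⟨s, k, hk, by rw [h]⟩
        have hadj : (AG (∀ i, R i)).Adj u w ↔ (AG (∀ i, R i)).Adj v w := by
          rw [← SimpleGraph.dist_eq_one_iff_adj, ← SimpleGraph.dist_eq_one_iff_adj, hd w hwX]
        have h' : (u.1 * w.1 = ⊥) ↔ (v.1 * w.1 = ⊥) := by
          constructor
          · intro h; exact (hadj.mp ⟨hune, h⟩).2
          · intro h; exact (hadj.mpr ⟨hvne, h⟩).2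
        rw [hu1, hv1] at h'
        rw [show w.1 = piIdeal (singleIdeal s ((maximalIdeal (R s)) ^ k)) from rfl] at h'
        rw [piIdeal_mul_single_eq_bot_iff, piIdeal_mul_single_eq_bot_iff, ← pow_add, ← pow_add,
          chain_pow_eq_bot_iff (h1 s) (h2 s), chain_pow_eq_bot_iff (h1 s) (h2 s)] at h'
        exact h'
      by_contra hne
      have hνs := hνpos s
      have has := ha s
      have hbs := hb s
      rcases Nat.lt_or_ge (a s) (b s) with h | h
      · have h3 := (hiff (ν s - b s) (by omega)).mpr (by omega)
        omega
      · have h4 : b s < a s := by omega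
        have h3 := (hiff (ν s - a s) (by omega)).mp (by omega)
        omega
    have hab : (fun i => (maximalIdeal (R i)) ^ a i) = fun i => (maximalIdeal (R i)) ^ b i :=
      funext fun i => by rw [key i]
    exact Subtype.ext (by rw [hu1, hv1, hab])
  refine ⟨hres, ?_⟩
  haveI : Finite (Ideal (∀ i, R i)) :=
    Finite.of_injective (fun I : Ideal (∀ i, R i) => (I : Set (∀ i, R i))) SetLike.coe_injective
  haveI : Finite (AGVertex (∀ i, R i)) := Subtype.finite
  set f : (Σ s : ι, Fin (ν s)) → AGVertex (∀ i, R i) :=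
    fun p => ⟨_, singleVertex h1 h2 hn
      (show p.2.1 ≤ ν p.1 - 1 by have := p.2.2; have := hνpos p.1; omega)⟩ with hf
  have hsub : X ⊆ Set.range f := by
    rintro v ⟨s, k, hk, hv1⟩
    exact ⟨⟨s, ⟨k, by have := hνpos s; omega⟩⟩, (Subtype.ext hv1).symm⟩
  calc metricDim (AG (∀ i, R i)) ≤ X.ncard := Nat.sInf_le ⟨X, hres, Set.toFinite X, rfl⟩
    _ ≤ (Set.range f).ncard := Set.ncard_le_ncard hsub (Set.toFinite _)
    _ ≤ ∑ i, ν i := by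
        rw [← Nat.card_coe_set_eq]
        calc Nat.card ↑(Set.range f) ≤ Nat.card (Σ s : ι, Fin (ν s)) :=
              Nat.card_le_card_of_surjective _ Set.rangeFactorization_surjective
          _ = ∑ i, ν i := by rw [Nat.card_eq_fintype_card, Fintype.card_sigma]; simp
end
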